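/- arXiv:1409.4097 — 4 statements merged into one kernel-verified Lean document; each statement's English description precedes it below -/
import Mathlib

section
/- For two probability measures μ₁, μ₂ on a compact interval I with cumulative distribution functions F₁, F₂, the Kolmogorov distance sup_{x∈I} |F₁(x) - F₂(x)| equals the supremum of ∫_I f (dμ₁ - dμ₂) over all absolutely continuous functions f with ∫_I |f'(x)| dx ≤ 1. -/
/-!
Writing `f x = f a + ∫_{[a,b]} 1_{t < x} g(t) dt` and applying Fubini gives
`∫ f dμ₁ - ∫ f dμ₂ = ∫_{[a,b]} (F₂ - F₁) g`, which is at most `sup |F₁ - F₂| · ∫ |g|`.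
The strict inequality `t < x` is what makes `μ {x | t < x} = 1 - F(t)` hold at every `t`, atoms
included. Conversely, the piecewise-linear functions falling from `1` at `c` to `0` at `c + δ` are
admissible, and as `δ → 0⁺` they converge boundedly to the indicator of `(-∞, c]`, so their test
values tend to `F₁(c) - F₂(c)`; the test set is symmetric, so they also reach `|F₁(c) - F₂(c)|`.
-/

open MeasureTheory Set Filter Topology

section Fubini

variable {X : Type*} [MeasurableSpace X] (μ : Measure X) {ν : Measure ℝ} {φ : X → ℝ}
  {g : ℝ → ℝ}

theorem integrable_indicator_Iio_prod [IsFiniteMeasure μ] (hφ : Measurable φ)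
    (hg : Integrable g ν) :
    Integrable (fun p : X × ℝ => (Iio (φ p.1)).indicator g p.2) (μ.prod ν) := by
  have hsnd : Integrable (fun p : X × ℝ => g p.2) (μ.prod ν) := by
    simpa using (integrable_const (1 : ℝ)).smul_prod hg
  exact hsnd.indicator (measurableSet_lt measurable_snd (hφ.comp measurable_fst))

theorem integral_indicator_Iio_eq_measureReal_mul (hφ : Measurable φ) (t : ℝ) :
    ∫ x, (Iio (φ x)).indicator g t ∂μ = μ.real {x | t < φ x} * g t := by
  have : (fun x => (Iio (φ x)).indicator g t) = {x | t < φ x}.indicator fun _ => g t := by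
    ext x; simp [indicator_apply]
  rw [this, integral_indicator_const _ (measurableSet_lt measurable_const hφ), smul_eq_mul]

theorem integrable_measureReal_lt_mul [IsFiniteMeasure μ] [SFinite ν] (hφ : Measurable φ)
    (hg : Integrable g ν) : Integrable (fun t => μ.real {x | t < φ x} * g t) ν := by
  simpa only [Function.comp_apply, Prod.swap, integral_indicator_Iio_eq_measureReal_mul μ hφ] using
    (integrable_indicator_Iio_prod μ hφ hg).swap.integral_prod_left

theorem integral_integral_indicator_Iio [IsFiniteMeasure μ] [SFinite ν] (hφ : Measurable φ)
    (hg : Integrable g ν) :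
    ∫ x, ∫ t, (Iio (φ x)).indicator g t ∂ν ∂μ = ∫ t, μ.real {x | t < φ x} * g t ∂ν := by
  rw [integral_integral_swap (integrable_indicator_Iio_prod μ hφ hg)]
  simp_rw [integral_indicator_Iio_eq_measureReal_mul μ hφ]

theorem measureReal_lt_eq_one_sub [IsProbabilityMeasure μ] (hφ : Measurable φ) (t : ℝ) :
    μ.real {x | t < φ x} = 1 - μ.real {x | φ x ≤ t} := by
  rw [← probReal_compl_eq_one_sub (measurableSet_le hφ measurable_const)]
  simp only [compl_ofPred, not_le]

end Fubini

theorem intervalIntegral_eq_setIntegral_indicator_Iio {a b x : ℝ} (hx : x ∈ Icc a b)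
    (g : ℝ → ℝ) : ∫ t in a..x, g t = ∫ t in Icc a b, (Iio x).indicator g t := by
  have hIco : Icc a b ∩ Iio x = Ico a x := by
    ext t
    simp only [mem_inter_iff, mem_Icc, mem_Iio, mem_Ico]
    exact ⟨fun h => ⟨h.1.1, h.2⟩, fun h => ⟨⟨h.1, h.2.le.trans hx.2⟩, h.2⟩⟩
  rw [intervalIntegral.integral_of_le hx.1, setIntegral_indicator measurableSet_Iio, hIco,
    integral_Ioc_eq_integral_Ioo, integral_Ico_eq_integral_Ioo]

section Primitive

variable {a b : ℝ} {f g : ℝ → ℝ}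

theorem integral_eq_add_integral_measureReal_lt (μ : Measure (Icc a b))
    [IsProbabilityMeasure μ] (hg : IntegrableOn g (Icc a b))
    (hf : ∀ x ∈ Icc a b, f x = f a + ∫ t in a..x, g t) :
    ∫ x, f (x : ℝ) ∂μ = f a + ∫ t in Icc a b, μ.real {x | t < (x : ℝ)} * g t := by
  have hprim : Integrable (fun x : Icc a b => ∫ t in Icc a b, (Iio (x : ℝ)).indicator g t) μ :=
    (integrable_indicator_Iio_prod μ measurable_subtype_coe hg).integral_prod_left
  calc ∫ x, f (x : ℝ) ∂μ
      = ∫ x : Icc a b, (f a + ∫ t in Icc a b, (Iio (x : ℝ)).indicator g t) ∂μ := by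
        refine integral_congr_ae (ae_of_all _ fun x => ?_)
        dsimp only
        rw [hf x x.2, intervalIntegral_eq_setIntegral_indicator_Iio x.2]
    _ = f a + ∫ x : Icc a b, (∫ t in Icc a b, (Iio (x : ℝ)).indicator g t) ∂μ := by
        rw [integral_add (integrable_const _) hprim, integral_const, probReal_univ, one_smul]
    _ = f a + ∫ t in Icc a b, μ.real {x | t < (x : ℝ)} * g t := by
        rw [integral_integral_indicator_Iio μ measurable_subtype_coe hg]

variable (μ₁ μ₂ : Measure (Icc a b)) [IsProbabilityMeasure μ₁] [IsProbabilityMeasure μ₂]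

theorem integral_sub_integral_eq_integral_cdf_sub_mul (hg : IntegrableOn g (Icc a b))
    (hf : ∀ x ∈ Icc a b, f x = f a + ∫ t in a..x, g t) :
    ∫ x, f (x : ℝ) ∂μ₁ - ∫ x, f (x : ℝ) ∂μ₂ =
      ∫ t in Icc a b, (μ₂.real {x | (x : ℝ) ≤ t} - μ₁.real {x | (x : ℝ) ≤ t}) * g t := by
  rw [integral_eq_add_integral_measureReal_lt μ₁ hg hf,
    integral_eq_add_integral_measureReal_lt μ₂ hg hf, add_sub_add_left_eq_sub,
    ← integral_sub (integrable_measureReal_lt_mul μ₁ measurable_subtype_coe hg)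
      (integrable_measureReal_lt_mul μ₂ measurable_subtype_coe hg)]
  congr 1 with t
  rw [measureReal_lt_eq_one_sub μ₁ measurable_subtype_coe,
    measureReal_lt_eq_one_sub μ₂ measurable_subtype_coe]
  ring

theorem bddAbove_abs_cdf_sub :
    BddAbove (range fun x : Icc a b => |μ₁.real {y | (y : ℝ) ≤ x} - μ₂.real {y | (y : ℝ) ≤ x}|) :=
  ⟨1, by
    rintro _ ⟨x, rfl⟩
    exact abs_sub_le_of_nonneg_of_le measureReal_nonneg measureReal_le_one measureReal_nonneg
      measureReal_le_one⟩

theorem integral_sub_integral_le_iSup_abs_cdf_sub (hg : IntegrableOn g (Icc a b))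
    (hg1 : ∫ t in Icc a b, |g t| ≤ 1) (hf : ∀ x ∈ Icc a b, f x = f a + ∫ t in a..x, g t) :
    ∫ x, f (x : ℝ) ∂μ₁ - ∫ x, f (x : ℝ) ∂μ₂ ≤
      ⨆ x : Icc a b, |μ₁.real {y | (y : ℝ) ≤ x} - μ₂.real {y | (y : ℝ) ≤ x}| := by
  set K := ⨆ x : Icc a b, |μ₁.real {y | (y : ℝ) ≤ x} - μ₂.real {y | (y : ℝ) ≤ x}|
  have hK : 0 ≤ K := Real.iSup_nonneg fun _ => abs_nonneg _
  have hbound : ∀ᵐ t ∂volume.restrict (Icc a b),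
      ‖(μ₂.real {x | (x : ℝ) ≤ t} - μ₁.real {x | (x : ℝ) ≤ t}) * g t‖ ≤ K * |g t| := by
    filter_upwards [ae_restrict_mem measurableSet_Icc] with t ht
    rw [Real.norm_eq_abs, abs_mul, abs_sub_comm]
    gcongr
    exact le_ciSup (bddAbove_abs_cdf_sub μ₁ μ₂) (⟨t, ht⟩ : Icc a b)
  calc ∫ x, f (x : ℝ) ∂μ₁ - ∫ x, f (x : ℝ) ∂μ₂
      ≤ ‖∫ t in Icc a b, (μ₂.real {x | (x : ℝ) ≤ t} - μ₁.real {x | (x : ℝ) ≤ t}) * g t‖ := by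
        rw [integral_sub_integral_eq_integral_cdf_sub_mul μ₁ μ₂ hg hf]
        exact le_abs_self _
    _ ≤ ∫ t in Icc a b, K * |g t| := norm_integral_le_of_norm_le (hg.abs.const_mul K) hbound
    _ = K * ∫ t in Icc a b, |g t| := integral_const_mul K _
    _ ≤ K := mul_le_of_le_one_right hK hg1

end Primitive

section Ramp

noncomputable def ramp (c δ t : ℝ) : ℝ := 1 - δ⁻¹ * max (min t (c + δ) - c) 0

noncomputable def rampSlope (c δ : ℝ) : ℝ → ℝ := (Ioc c (c + δ)).indicator fun _ => -δ⁻¹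

variable {c δ t : ℝ}

theorem ramp_of_le (h : t ≤ c) : ramp c δ t = 1 := by
  have : min t (c + δ) - c ≤ 0 := by linarith [min_le_left t (c + δ)]
  simp [ramp, max_eq_right this]

theorem ramp_of_add_le (hδ : 0 < δ) (h : c + δ ≤ t) : ramp c δ t = 0 := by
  simp [ramp, min_eq_right h, max_eq_left hδ.le, hδ.ne']

theorem abs_ramp_le_one (hδ : 0 < δ) : |ramp c δ t| ≤ 1 := by
  have h0 : 0 ≤ δ⁻¹ * max (min t (c + δ) - c) 0 :=
    mul_nonneg (inv_nonneg.2 hδ.le) (le_max_right _ _)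
  have h1 : δ⁻¹ * max (min t (c + δ) - c) 0 ≤ 1 := by
    rw [inv_mul_le_iff₀ hδ, mul_one]
    exact max_le (by linarith [min_le_right t (c + δ)]) hδ.le
  rw [abs_le, ramp]
  constructor <;> linarith

theorem continuous_ramp : Continuous (ramp c δ) := by
  unfold ramp; fun_prop

theorem ramp_eq_add_integral_rampSlope {a : ℝ} (hac : a ≤ c) (hat : a ≤ t) :
    ramp c δ t = ramp c δ a + ∫ s in a..t, rampSlope c δ s := by
  rw [ramp_of_le hac, intervalIntegral.integral_of_le hat, rampSlope,
    setIntegral_indicator measurableSet_Ioc, Ioc_inter_Ioc, max_eq_right hac, setIntegral_const,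
    Real.volume_real_Ioc, smul_eq_mul, ramp]
  ring

theorem integrable_rampSlope : Integrable (rampSlope c δ) :=
  (integrableOn_const measure_Ioc_lt_top.ne).integrable_indicator measurableSet_Ioc

theorem setIntegral_abs_rampSlope_le_one (hδ : 0 < δ) (s : Set ℝ) :
    ∫ t in s, |rampSlope c δ t| ≤ 1 := by
  calc ∫ t in s, |rampSlope c δ t|
      ≤ ∫ t, |rampSlope c δ t| :=
        setIntegral_le_integral integrable_rampSlope.abs (ae_of_all _ fun t => abs_nonneg _)
    _ = ∫ t, (Ioc c (c + δ)).indicator (fun _ => δ⁻¹) t := by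
        congr 1 with t
        by_cases ht : t ∈ Ioc c (c + δ) <;> simp [rampSlope, ht, hδ.le]
    _ = 1 := by
        rw [integral_indicator_const _ measurableSet_Ioc, Real.volume_real_Ioc, smul_eq_mul,
          add_sub_cancel_left, max_eq_left hδ.le, mul_inv_cancel₀ hδ.ne']

theorem tendsto_ramp_nhdsGT (c t : ℝ) :
    Tendsto (fun δ => ramp c δ t) (𝓝[>] 0) (𝓝 ((Iic c).indicator 1 t)) := by
  by_cases ht : t ≤ c
  · simp only [indicator_of_mem (mem_Iic.2 ht), Pi.one_apply, ramp_of_le ht, tendsto_const_nhds]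
  · rw [indicator_of_notMem (notMem_Iic.2 (not_le.1 ht))]
    refine tendsto_const_nhds.congr' ?_
    filter_upwards [Ioo_mem_nhdsGT (sub_pos.2 (not_le.1 ht))] with δ hδ
    exact (ramp_of_add_le hδ.1 (by linarith [hδ.2])).symm

theorem tendsto_integral_ramp {X : Type*} [MeasurableSpace X] (μ : Measure X)
    [IsFiniteMeasure μ] {φ : X → ℝ} (hφ : Measurable φ) (c : ℝ) :
    Tendsto (fun δ => ∫ x, ramp c δ (φ x) ∂μ) (𝓝[>] 0) (𝓝 (μ.real {x | φ x ≤ c})) := by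
  rw [← integral_indicator_one (measurableSet_le hφ measurable_const)]
  refine tendsto_integral_filter_of_dominated_convergence (fun _ => 1) ?_ ?_
    (integrable_const 1) (ae_of_all _ fun x => tendsto_ramp_nhdsGT c (φ x))
  · exact Eventually.of_forall fun δ => (continuous_ramp.measurable.comp hφ).aestronglyMeasurable
  · filter_upwards [self_mem_nhdsWithin] with δ hδ
    exact ae_of_all _ fun x => abs_ramp_le_one hδ

end Ramp

section TestValues

variable {a b : ℝ} (μ₁ μ₂ : Measure (Icc a b))

def kolmogorovTestValues : Set ℝ :=
  { r : ℝ | ∃ f g : ℝ → ℝ, IntegrableOn g (Icc a b) ∧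
    (∫ t in Icc a b, |g t|) ≤ 1 ∧
    (∀ x ∈ Icc a b, f x = f a + ∫ t in a..x, g t) ∧
    r = (∫ x, f (x : ℝ) ∂μ₁) - ∫ x, f (x : ℝ) ∂μ₂ }

theorem zero_mem_kolmogorovTestValues : (0 : ℝ) ∈ kolmogorovTestValues μ₁ μ₂ :=
  ⟨0, 0, integrableOn_zero, by simp, by simp, by simp⟩

theorem neg_mem_kolmogorovTestValues {r : ℝ} (hr : r ∈ kolmogorovTestValues μ₁ μ₂) :
    -r ∈ kolmogorovTestValues μ₁ μ₂ := by
  obtain ⟨f, g, hg, hg1, hf, rfl⟩ := hr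
  refine ⟨-f, -g, hg.neg, by simpa using hg1, fun x hx => ?_, ?_⟩
  · simp only [Pi.neg_apply, hf x hx, intervalIntegral.integral_neg, neg_add]
  · simp only [Pi.neg_apply, integral_neg, neg_sub_neg, neg_sub]

theorem ramp_mem_kolmogorovTestValues {c δ : ℝ} (hac : a ≤ c) (hδ : 0 < δ) :
    ∫ x, ramp c δ x ∂μ₁ - ∫ x, ramp c δ x ∂μ₂ ∈ kolmogorovTestValues μ₁ μ₂ :=
  ⟨ramp c δ, rampSlope c δ, integrable_rampSlope.integrableOn,
    setIntegral_abs_rampSlope_le_one hδ _, fun _ hx => ramp_eq_add_integral_rampSlope hac hx.1,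
    rfl⟩

variable [IsProbabilityMeasure μ₁] [IsProbabilityMeasure μ₂]

theorem le_iSup_of_mem_kolmogorovTestValues {r : ℝ} (hr : r ∈ kolmogorovTestValues μ₁ μ₂) :
    r ≤ ⨆ x : Icc a b, |μ₁.real {y | (y : ℝ) ≤ x} - μ₂.real {y | (y : ℝ) ≤ x}| := by
  obtain ⟨f, g, hg, hg1, hf, rfl⟩ := hr
  exact integral_sub_integral_le_iSup_abs_cdf_sub μ₁ μ₂ hg hg1 hf

theorem bddAbove_kolmogorovTestValues : BddAbove (kolmogorovTestValues μ₁ μ₂) :=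
  ⟨_, fun _ => le_iSup_of_mem_kolmogorovTestValues μ₁ μ₂⟩

theorem abs_cdf_sub_le_sSup_kolmogorovTestValues (x : Icc a b) :
    |μ₁.real {y | (y : ℝ) ≤ x} - μ₂.real {y | (y : ℝ) ≤ x}| ≤
      sSup (kolmogorovTestValues μ₁ μ₂) := by
  have hlim := (tendsto_integral_ramp μ₁ measurable_subtype_coe x).sub
    (tendsto_integral_ramp μ₂ measurable_subtype_coe x)
  have hmem : ∀ᶠ δ in 𝓝[>] 0,
      ∫ y, ramp x δ y ∂μ₁ - ∫ y, ramp x δ y ∂μ₂ ∈ kolmogorovTestValues μ₁ μ₂ :=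
    eventually_nhdsWithin_of_forall fun δ hδ => ramp_mem_kolmogorovTestValues μ₁ μ₂ x.2.1 hδ
  have hbdd := bddAbove_kolmogorovTestValues μ₁ μ₂
  refine abs_le'.2 ⟨le_of_tendsto hlim ?_, le_of_tendsto hlim.neg ?_⟩
  · exact hmem.mono fun δ hδ => le_csSup hbdd hδ
  · exact hmem.mono fun δ hδ => le_csSup hbdd (neg_mem_kolmogorovTestValues μ₁ μ₂ hδ)

end TestValues

theorem kolmogorov_eq_sup_test_functions_general {a b : ℝ}
    (μ₁ μ₂ : Measure (Set.Icc a b))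
    [IsProbabilityMeasure μ₁] [IsProbabilityMeasure μ₂] :
    (⨆ x : Set.Icc a b,
        |(μ₁ {y | (y : ℝ) ≤ x}).toReal - (μ₂ {y | (y : ℝ) ≤ x}).toReal|) =
      sSup { r : ℝ | ∃ f g : ℝ → ℝ, IntegrableOn g (Set.Icc a b) ∧
        (∫ t in Set.Icc a b, |g t|) ≤ 1 ∧
        (∀ x ∈ Set.Icc a b, f x = f a + ∫ t in a..x, g t) ∧
        r = (∫ x, f (x : ℝ) ∂μ₁) - ∫ x, f (x : ℝ) ∂μ₂ } := by
  change _ = sSup (kolmogorovTestValues μ₁ μ₂)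
  have hzero := zero_mem_kolmogorovTestValues μ₁ μ₂
  exact le_antisymm
    (Real.iSup_le (abs_cdf_sub_le_sSup_kolmogorovTestValues μ₁ μ₂)
      (le_csSup (bddAbove_kolmogorovTestValues μ₁ μ₂) hzero))
    (csSup_le ⟨0, hzero⟩ fun _ => le_iSup_of_mem_kolmogorovTestValues μ₁ μ₂)

/-- The Kolmogorov distance between two probability measures on a compact
interval equals the supremum of `∫ f (dμ₁ - dμ₂)` over absolutely continuous `f`
(i.e. `f x = f a + ∫_a^x g` for an integrable `g`) with `∫_I |f'| ≤ 1`. -/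
theorem kolmogorov_eq_sup_test_functions {a b : ℝ} (hab : a ≤ b)
    (μ₁ μ₂ : Measure (Set.Icc a b))
    [IsProbabilityMeasure μ₁] [IsProbabilityMeasure μ₂] :
    (⨆ x : Set.Icc a b,
        |(μ₁ {y | (y : ℝ) ≤ x}).toReal - (μ₂ {y | (y : ℝ) ≤ x}).toReal|) =
      sSup { r : ℝ | ∃ f g : ℝ → ℝ, IntegrableOn g (Set.Icc a b) ∧
        (∫ t in Set.Icc a b, |g t|) ≤ 1 ∧
        (∀ x ∈ Set.Icc a b, f x = f a + ∫ t in a..x, g t) ∧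
        r = (∫ x, f (x : ℝ) ∂μ₁) - ∫ x, f (x : ℝ) ∂μ₂ } :=
  kolmogorov_eq_sup_test_functions_general μ₁ μ₂
end

section
/- The 1-Wasserstein distance between probability measures μ₁ and μ₂ on a compact interval I, defined as the infimum over couplings m of ∫ |x-y| dm(x,y), equals the supremum of ∫_I f (dμ₁ - dμ₂) over all 1-Lipschitz functions f : I → ℝ (Kantorovich–Rubinstein duality). -/
/-!
With `F₁, F₂` the distribution functions of `μ₁, μ₂`, both sides equal `∫_a^b |F₁ - F₂|`.

The infimum is attained by the quantile coupling, the image of the uniform measure on `[0, 1]`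
under `u ↦ (F₁⁻¹ u, F₂⁻¹ u)`: since `F⁻¹ u ≤ t ↔ u ≤ F t`, the quantities `|F₁⁻¹ u - F₂⁻¹ u|` and
`|F₁ t - F₂ t|` are the lengths of the two families of sections of one planar set.

The supremum is attained by the 1-Lipschitz potential `f x = ∫_a^x sign (F₂ - F₁)`: by Fubini,
`∫ f dμ = ∫_a^b sign (F₂ - F₁) (1 - F)`, so `∫ f dμ₁ - ∫ f dμ₂ = ∫_a^b |F₁ - F₂|`.

Any such Lipschitz gap is at most any transport cost, which closes the argument.
-/

open MeasureTheory ProbabilityTheory Set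
open scoped ENNReal NNReal symmDiff

@[fun_prop]
theorem StieltjesFunction.measurable (f : StieltjesFunction ℝ) : Measurable f :=
  f.mono.measurable

theorem Set.Ici_symmDiff_Ici (x y : ℝ) : Ici x ∆ Ici y = Ico (min x y) (max x y) := by
  ext t; simp only [mem_symmDiff, mem_Ici, mem_Ico, min_le_iff, lt_max_iff]; grind

theorem Set.Iic_symmDiff_Iic (x y : ℝ) : Iic x ∆ Iic y = Ioc (min x y) (max x y) := by
  ext t; simp only [mem_symmDiff, mem_Iic, mem_Ioc, min_lt_iff, le_max_iff]; grind

theorem Real.volume_restrict_Icc_Ici_symmDiff_Ici {p q x y : ℝ} (hx : x ∈ Icc p q)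
    (hy : y ∈ Icc p q) :
    volume.restrict (Icc p q) (Ici x ∆ Ici y) = ENNReal.ofReal |x - y| := by
  rw [Ici_symmDiff_Ici, Measure.restrict_apply measurableSet_Ico,
    inter_eq_left.2 (Ico_subset_Icc_self.trans (Icc_subset_Icc (le_min hx.1 hy.1)
      (max_le hx.2 hy.2))), Real.volume_Ico, max_sub_min_eq_abs, abs_sub_comm]

theorem Real.volume_restrict_Icc_Iic_symmDiff_Iic {p q x y : ℝ} (hx : x ∈ Icc p q)
    (hy : y ∈ Icc p q) :
    volume.restrict (Icc p q) (Iic x ∆ Iic y) = ENNReal.ofReal |x - y| := by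
  rw [Iic_symmDiff_Iic, Measure.restrict_apply measurableSet_Ioc,
    inter_eq_left.2 (Ioc_subset_Icc_self.trans (Icc_subset_Icc (le_min hx.1 hy.1)
      (max_le hx.2 hy.2))), Real.volume_Ioc, max_sub_min_eq_abs, abs_sub_comm]

theorem lipschitzWith_intervalIntegral {E : Type*} [NormedAddCommGroup E] [NormedSpace ℝ E]
    {g : ℝ → E} {C : ℝ≥0} (hg : AEStronglyMeasurable g) (hC : ∀ t, ‖g t‖ ≤ C) (a : ℝ) :
    LipschitzWith C fun x => ∫ t in a..x, g t := by
  have hint : ∀ x y, IntervalIntegrable g volume x y := fun _ _ =>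
    intervalIntegrable_const.mono_fun' hg.restrict (ae_of_all _ hC)
  refine LipschitzWith.of_dist_le_mul fun x y => ?_
  rw [dist_eq_norm, intervalIntegral.integral_interval_sub_left (hint a x) (hint a y),
    Real.dist_eq]
  exact intervalIntegral.norm_integral_le_of_norm_le_const fun t _ => hC t

theorem LipschitzWith.integral_map_fst_sub_integral_map_snd_le {X : Type*} [PseudoMetricSpace X]
    [CompactSpace X] [MeasurableSpace X] [BorelSpace X] {m : Measure (X × X)} [IsFiniteMeasure m]
    {f : X → ℝ} (hf : LipschitzWith 1 f) :
    ∫ x, f x ∂(m.map Prod.fst) - ∫ x, f x ∂(m.map Prod.snd) ≤ ∫ p, dist p.1 p.2 ∂m := by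
  have hint : ∀ {g : X × X → ℝ}, Continuous g → Integrable g m := fun hg =>
    hg.integrable_of_hasCompactSupport (HasCompactSupport.of_compactSpace _)
  have hf₁ : Continuous fun p : X × X => f p.1 := hf.continuous.comp continuous_fst
  have hf₂ : Continuous fun p : X × X => f p.2 := hf.continuous.comp continuous_snd
  rw [integral_map measurable_fst.aemeasurable hf.continuous.aestronglyMeasurable,
    integral_map measurable_snd.aemeasurable hf.continuous.aestronglyMeasurable,
    ← integral_sub (hint hf₁) (hint hf₂)]
  refine integral_mono ((hint hf₁).sub (hint hf₂)) (hint continuous_dist) fun p => ?_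
  simpa [Real.dist_eq] using (le_abs_self _).trans (hf.dist_le_mul p.1 p.2)

theorem csInf_eq_csSup_of_mem_of_forall_le {α : Type*} [ConditionallyCompleteLattice α]
    {S T : Set α} {c : α} (hT : c ∈ T) (hS : c ∈ S) (hle : ∀ s ∈ S, ∀ r ∈ T, s ≤ r) :
    sInf T = sSup S :=
  (IsLeast.csInf_eq ⟨hT, fun r hr => hle c hS r hr⟩).trans
    (IsGreatest.csSup_eq ⟨hS, fun s hs => hle s hs c hT⟩).symm

section Quantile

variable {a b : ℝ} (μ : Measure (Icc a b))

instance [IsProbabilityMeasure μ] : IsProbabilityMeasure (μ.map Subtype.val) :=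
  Measure.isProbabilityMeasure_map measurable_subtype_coe.aemeasurable

theorem cdf_map_subtypeVal_right [IsProbabilityMeasure μ] : cdf (μ.map Subtype.val) b = 1 := by
  have hpre : Subtype.val ⁻¹' Iic b = (univ : Set (Icc a b)) := eq_univ_of_forall fun x => x.2.2
  rw [cdf_eq_real, measureReal_def, Measure.map_apply measurable_subtype_coe measurableSet_Iic,
    hpre, measure_univ, ENNReal.toReal_one]

variable [Fact (a ≤ b)]

/-- `sInf ∅ = b` in the complete lattice `Icc a b`, so this is monotone on all of `ℝ`. -/
noncomputable def quantile (u : ℝ) : Icc a b :=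
  sInf {x | u ≤ cdf (μ.map Subtype.val) x}

theorem monotone_quantile : Monotone (quantile μ) :=
  fun _ _ huv => sInf_le_sInf fun _ hx => huv.trans hx

@[fun_prop]
theorem measurable_quantile : Measurable (quantile μ) :=
  (monotone_quantile μ).measurable

variable [IsProbabilityMeasure μ]

theorem quantile_le_iff {u x : ℝ} (hu : u ≤ 1) (hx : x ∈ Icc a b) :
    (quantile μ u : ℝ) ≤ x ↔ u ≤ cdf (μ.map Subtype.val) x := by
  refine ⟨fun h => ?_, fun h => (sInf_le h : quantile μ u ≤ ⟨x, hx⟩)⟩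
  set F := cdf (μ.map Subtype.val)
  set S := {x : Icc a b | u ≤ F x}
  have hne : S.Nonempty := ⟨⊤, hu.trans (cdf_map_subtypeVal_right μ).ge⟩
  -- right continuity of `F` lets the infimum of `S` stay in `S`
  have hcont : ContinuousWithinAt (fun y : Icc a b => F y) S (sInf S) :=
    (F.right_continuous _).comp continuous_subtype_val.continuousWithinAt
      fun _ hy => (sInf_le hy : sInf S ≤ _)
  have hq : u ≤ F (quantile μ u) :=
    continuousWithinAt_const.closure_le (sInf_mem_closure hne) hcont fun _ hy => hy
  exact hq.trans (F.mono h)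

theorem map_quantile : (volume.restrict (Icc (0 : ℝ) 1)).map (quantile μ) = μ := by
  refine Measure.ext_of_Iic _ _ fun x => ?_
  have hF := cdf_le_one (μ.map Subtype.val) x
  have hpre : quantile μ ⁻¹' Iic x ∩ Icc 0 1 = Icc 0 (cdf (μ.map Subtype.val) x) := by
    ext u
    simp only [mem_inter_iff, mem_preimage, mem_Iic, mem_Icc]
    constructor
    · rintro ⟨h, hu0, hu1⟩
      exact ⟨hu0, (quantile_le_iff μ hu1 x.2).1 h⟩
    · rintro ⟨hu0, hu⟩
      exact ⟨(quantile_le_iff μ (hu.trans hF) x.2).2 hu, hu0, hu.trans hF⟩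
  rw [Measure.map_apply (measurable_quantile μ) measurableSet_Iic,
    Measure.restrict_apply (measurable_quantile μ measurableSet_Iic), hpre, Real.volume_Icc,
    sub_zero, ofReal_cdf, Measure.map_apply measurable_subtype_coe measurableSet_Iic]
  rfl

variable (μ₁ μ₂ : Measure (Icc a b))

/-- Both sides are the measure of `{(u, t) | t lies between the two quantiles at u}`, sliced
along `t` on the left and along `u` on the right. -/
theorem lintegral_abs_quantile_sub_quantile [IsProbabilityMeasure μ₁]
    [IsProbabilityMeasure μ₂] :
    ∫⁻ u in Icc 0 1, ENNReal.ofReal |(quantile μ₁ u : ℝ) - quantile μ₂ u| =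
      ∫⁻ t in Icc a b,
        ENNReal.ofReal |cdf (μ₁.map Subtype.val) t - cdf (μ₂.map Subtype.val) t| := by
  set E : Set (ℝ × ℝ) :=
    {p | (quantile μ₁ p.1 : ℝ) ≤ p.2} ∆ {p | (quantile μ₂ p.1 : ℝ) ≤ p.2}
  have hE : MeasurableSet E :=
    (measurableSet_le (by fun_prop) measurable_snd).symmDiff
      (measurableSet_le (by fun_prop) measurable_snd)
  calc _ = (volume.restrict (Icc (0 : ℝ) 1)).prod (volume.restrict (Icc a b)) E := by
        rw [Measure.prod_apply hE]
        exact lintegral_congr fun u =>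
          (Real.volume_restrict_Icc_Ici_symmDiff_Ici (quantile μ₁ u).2 (quantile μ₂ u).2).symm
    _ = _ := by
        rw [Measure.prod_apply_symm hE]
        refine setLIntegral_congr_fun measurableSet_Icc fun t ht => ?_
        have hslice : (fun u => (u, t)) ⁻¹' E ∩ Icc 0 1 =
            (Iic (cdf (μ₁.map Subtype.val) t) ∆ Iic (cdf (μ₂.map Subtype.val) t)) ∩ Icc 0 1 := by
          ext u
          simp only [E, mem_inter_iff, mem_preimage, mem_symmDiff, mem_ofPred_eq, mem_Iic]
          exact and_congr_left fun hu => by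
            rw [quantile_le_iff μ₁ hu.2 ht, quantile_le_iff μ₂ hu.2 ht]
        rw [Measure.restrict_apply' measurableSet_Icc, hslice,
          ← Measure.restrict_apply' measurableSet_Icc]
        exact Real.volume_restrict_Icc_Iic_symmDiff_Iic ⟨cdf_nonneg _ _, cdf_le_one _ _⟩
          ⟨cdf_nonneg _ _, cdf_le_one _ _⟩

noncomputable def quantileCoupling : Measure (Icc a b × Icc a b) :=
  (volume.restrict (Icc (0 : ℝ) 1)).map fun u => (quantile μ₁ u, quantile μ₂ u)

instance : IsProbabilityMeasure (quantileCoupling μ₁ μ₂) := by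
  have : IsProbabilityMeasure (volume.restrict (Icc (0 : ℝ) 1)) := ⟨by simp⟩
  exact Measure.isProbabilityMeasure_map (by fun_prop)

theorem map_fst_quantileCoupling [IsProbabilityMeasure μ₁] :
    (quantileCoupling μ₁ μ₂).map Prod.fst = μ₁ := by
  rw [quantileCoupling, Measure.map_map measurable_fst (by fun_prop)]
  exact map_quantile μ₁

theorem map_snd_quantileCoupling [IsProbabilityMeasure μ₂] :
    (quantileCoupling μ₁ μ₂).map Prod.snd = μ₂ := by
  rw [quantileCoupling, Measure.map_map measurable_snd (by fun_prop)]
  exact map_quantile μ₂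

theorem integral_abs_sub_quantileCoupling [IsProbabilityMeasure μ₁] [IsProbabilityMeasure μ₂] :
    ∫ p, |(p.1 : ℝ) - p.2| ∂quantileCoupling μ₁ μ₂ =
      ∫ t in Ioc a b, |cdf (μ₁.map Subtype.val) t - cdf (μ₂.map Subtype.val) t| := by
  rw [quantileCoupling, integral_map (by fun_prop) (by fun_prop),
    Measure.restrict_congr_set Ioc_ae_eq_Icc,
    integral_eq_lintegral_of_nonneg_ae (ae_of_all _ fun _ => abs_nonneg _) (by fun_prop),
    integral_eq_lintegral_of_nonneg_ae (ae_of_all _ fun _ => abs_nonneg _) (by fun_prop),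
    lintegral_abs_quantile_sub_quantile]

end Quantile

section Potential

variable {a b : ℝ}

theorem integral_intervalIntegral_eq_setIntegral_mul_one_sub_cdf {g : ℝ → ℝ}
    (hg : IntegrableOn g (Ioc a b)) (μ : Measure (Icc a b)) [IsProbabilityMeasure μ] :
    ∫ x, (∫ t in a..(x : ℝ), g t) ∂μ =
      ∫ t in Ioc a b, g t * (1 - cdf (μ.map Subtype.val) t) := by
  have hprimitive : ∀ x : Icc a b,
      ∫ t in a..(x : ℝ), g t = ∫ t in Ioc a b, (Iio (x : ℝ)).indicator g t := fun x => by
    have hx : Ioc a b ∩ Iio (x : ℝ) = Ioo a x := by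
      ext t; simp only [mem_inter_iff, mem_Ioc, mem_Iio, mem_Ioo]
      exact ⟨fun h => ⟨h.1.1, h.2⟩, fun h => ⟨⟨h.1, h.2.le.trans x.2.2⟩, h.2⟩⟩
    rw [intervalIntegral.integral_of_le x.2.1, setIntegral_indicator measurableSet_Iio, hx,
      integral_Ioc_eq_integral_Ioo]
  have hint : Integrable (Function.uncurry fun (x : Icc a b) t => (Iio (x : ℝ)).indicator g t)
      (μ.prod (volume.restrict (Ioc a b))) :=
    (hg.comp_snd μ).indicator (s := {p : Icc a b × ℝ | p.2 < p.1})
      (measurableSet_lt (by fun_prop) (by fun_prop))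
  have htail : ∀ t, μ.real {x | t < (x : ℝ)} = 1 - cdf (μ.map Subtype.val) t := fun t => by
    rw [cdf_eq_real, ← probReal_compl_eq_one_sub measurableSet_Iic, compl_Iic,
      map_measureReal_apply measurable_subtype_coe measurableSet_Ioi]
    rfl
  simp_rw [hprimitive]
  rw [integral_integral_swap hint]
  refine setIntegral_congr_fun measurableSet_Ioc fun t _ => ?_
  have hslice : (fun x : Icc a b => (Iio (x : ℝ)).indicator g t) =
      {x : Icc a b | t < x}.indicator fun _ => g t := rfl
  rw [hslice, integral_indicator_const _ (measurableSet_lt measurable_const (by fun_prop)),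
    htail, smul_eq_mul, mul_comm]

variable (μ₁ μ₂ : Measure (Icc a b))

noncomputable def kantorovichSlope (t : ℝ) : ℝ :=
  if cdf (μ₁.map Subtype.val) t ≤ cdf (μ₂.map Subtype.val) t then 1 else -1

noncomputable def kantorovichPotential (x : Icc a b) : ℝ :=
  ∫ t in a..(x : ℝ), kantorovichSlope μ₁ μ₂ t

theorem measurable_kantorovichSlope : Measurable (kantorovichSlope μ₁ μ₂) :=
  Measurable.ite (measurableSet_le (by fun_prop) (by fun_prop)) measurable_const measurable_const

theorem norm_kantorovichSlope_le (t : ℝ) : ‖kantorovichSlope μ₁ μ₂ t‖ ≤ 1 := by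
  unfold kantorovichSlope
  split_ifs <;> simp

theorem kantorovichSlope_mul_cdf_sub_cdf (t : ℝ) :
    kantorovichSlope μ₁ μ₂ t * (cdf (μ₂.map Subtype.val) t - cdf (μ₁.map Subtype.val) t) =
      |cdf (μ₁.map Subtype.val) t - cdf (μ₂.map Subtype.val) t| := by
  unfold kantorovichSlope
  split_ifs with h
  · rw [one_mul, abs_sub_comm, abs_of_nonneg (sub_nonneg.2 h)]
  · rw [neg_one_mul, neg_sub, abs_of_pos (sub_pos.2 (not_le.1 h))]

theorem lipschitzWith_kantorovichPotential : LipschitzWith 1 (kantorovichPotential μ₁ μ₂) := by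
  have := (lipschitzWith_intervalIntegral (C := 1)
    (measurable_kantorovichSlope μ₁ μ₂).aestronglyMeasurable
    (by simpa using norm_kantorovichSlope_le μ₁ μ₂) a).comp (LipschitzWith.subtype_val (Icc a b))
  rwa [mul_one] at this

theorem integral_kantorovichPotential_sub [IsProbabilityMeasure μ₁] [IsProbabilityMeasure μ₂] :
    ∫ x, kantorovichPotential μ₁ μ₂ x ∂μ₁ - ∫ x, kantorovichPotential μ₁ μ₂ x ∂μ₂ =
      ∫ t in Ioc a b, |cdf (μ₁.map Subtype.val) t - cdf (μ₂.map Subtype.val) t| := by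
  have hg : IntegrableOn (kantorovichSlope μ₁ μ₂) (Ioc a b) :=
    Measure.integrableOn_of_bounded measure_Ioc_lt_top.ne
      (measurable_kantorovichSlope μ₁ μ₂).aestronglyMeasurable
      (ae_of_all _ (norm_kantorovichSlope_le μ₁ μ₂))
  have hint : ∀ (μ : Measure (Icc a b)) [IsProbabilityMeasure μ],
      IntegrableOn (fun t => kantorovichSlope μ₁ μ₂ t * (1 - cdf (μ.map Subtype.val) t))
        (Ioc a b) := fun μ _ =>
    hg.mul_bdd (by fun_prop) (c := 1) (ae_of_all _ fun t => by
      rw [Real.norm_of_nonneg (sub_nonneg.2 (cdf_le_one _ t))]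
      linarith [cdf_nonneg (μ.map Subtype.val) t])
  unfold kantorovichPotential
  rw [integral_intervalIntegral_eq_setIntegral_mul_one_sub_cdf hg,
    integral_intervalIntegral_eq_setIntegral_mul_one_sub_cdf hg,
    ← integral_sub (hint μ₁) (hint μ₂)]
  refine integral_congr_ae (ae_of_all _ fun t => ?_)
  dsimp only
  rw [← kantorovichSlope_mul_cdf_sub_cdf]
  ring

end Potential

/-- Kantorovich–Rubinstein duality: the 1-Wasserstein distance between
probability measures on a compact interval, defined as the infimum of `∫ |x-y| dm`
over couplings `m`, equals the supremum of `∫ f (dμ₁ - dμ₂)` over 1-Lipschitz `f`. -/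
theorem wasserstein_duality {a b : ℝ} (hab : a ≤ b)
    (μ₁ μ₂ : Measure (Set.Icc a b))
    [IsProbabilityMeasure μ₁] [IsProbabilityMeasure μ₂] :
    sInf { r : ℝ | ∃ m : Measure (Set.Icc a b × Set.Icc a b),
        IsProbabilityMeasure m ∧ m.map Prod.fst = μ₁ ∧ m.map Prod.snd = μ₂ ∧
        r = ∫ p, |(p.1 : ℝ) - (p.2 : ℝ)| ∂m } =
      sSup { r : ℝ | ∃ f : Set.Icc a b → ℝ, LipschitzWith 1 f ∧
        r = (∫ x, f x ∂μ₁) - ∫ x, f x ∂μ₂ } := by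
  have : Fact (a ≤ b) := ⟨hab⟩
  refine csInf_eq_csSup_of_mem_of_forall_le
    (c := ∫ t in Ioc a b, |cdf (μ₁.map Subtype.val) t - cdf (μ₂.map Subtype.val) t|) ?_ ?_ ?_
  · exact ⟨quantileCoupling μ₁ μ₂, inferInstance, map_fst_quantileCoupling μ₁ μ₂,
      map_snd_quantileCoupling μ₁ μ₂, (integral_abs_sub_quantileCoupling μ₁ μ₂).symm⟩
  · exact ⟨kantorovichPotential μ₁ μ₂, lipschitzWith_kantorovichPotential μ₁ μ₂,
      (integral_kantorovichPotential_sub μ₁ μ₂).symm⟩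
  · rintro _ ⟨f, hf, rfl⟩ _ ⟨m, hm, rfl, rfl, rfl⟩
    exact hf.integral_map_fst_sub_integral_map_snd_le
end

section
/- Let D = [[0,1],[1,0]] ∈ M₂(ℝ) and let ρ₀ = [[p₀,q₀],[q₀,1-p₀]] and ρ₁ = [[p₁,q₁],[q₁,1-p₁]] be two real symmetric density matrices with q₀ ≠ q₁. Then the Connes spectral distance d_D(ρ₀,ρ₁) = sup { |tr(ρ₀ f) - tr(ρ₁ f)| : f ∈ M₂(ℝ), ‖[D,f]‖ ≤ 1 } is infinite. -/
/-- The operator (spectral) norm of a real 2×2 matrix, as the supremum of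
`‖A v‖` over Euclidean unit vectors `v`. -/
noncomputable def opNorm2 (A : Matrix (Fin 2) (Fin 2) ℝ) : ℝ :=
  sSup { r : ℝ | ∃ v : EuclideanSpace ℝ (Fin 2), ‖v‖ ≤ 1 ∧
    r = ‖(Matrix.toEuclideanLin A) v‖ }

/-! Every multiple `f = t • D` commutes with `D`, so `‖[D, f]‖ = 0`, while the two states
tell `f` apart by `2 t (q₀ - q₁)`, which is unbounded in `t`. -/

lemma opNorm2_zero : opNorm2 0 = 0 := by
  have : { r : ℝ | ∃ v : EuclideanSpace ℝ (Fin 2), ‖v‖ ≤ 1 ∧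
      r = ‖(Matrix.toEuclideanLin (0 : Matrix (Fin 2) (Fin 2) ℝ)) v‖ } = {0} := by
    ext r
    constructor
    · rintro ⟨v, -, rfl⟩
      simp
    · rintro rfl
      exact ⟨0, by simp, by simp⟩
  rw [opNorm2, this, csSup_singleton]

lemma trace_mul_pauliX {R : Type*} [CommRing R] (M : Matrix (Fin 2) (Fin 2) R) :
    (M * Matrix.of ![![0, 1], ![1, 0]]).trace = M 0 1 + M 1 0 := by
  simp [Matrix.trace, Matrix.mul_apply, Fin.sum_univ_two, add_comm]

lemma not_bddAbove_range_abs_mul {c : ℝ} (hc : c ≠ 0) :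
    ¬ BddAbove (Set.range fun t : ℝ => |t * c|) := by
  rintro ⟨b, hb⟩
  have hb' : |(|b| + 1) / c * c| ≤ b := hb ⟨_, rfl⟩
  rw [div_mul_cancel₀ _ hc, abs_of_pos (by positivity)] at hb'
  linarith [le_abs_self b]

theorem connes_distance_unbounded_general (p₀ p₁ q₀ q₁ : ℝ) (hq : q₀ ≠ q₁) :
    ¬ BddAbove { r : ℝ | ∃ f : Matrix (Fin 2) (Fin 2) ℝ,
      opNorm2 (Matrix.of ![![(0:ℝ), 1], ![1, 0]] * f
        - f * Matrix.of ![![(0:ℝ), 1], ![1, 0]]) ≤ 1 ∧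
      r = |(Matrix.of ![![p₀, q₀], ![q₀, 1 - p₀]] * f).trace
            - (Matrix.of ![![p₁, q₁], ![q₁, 1 - p₁]] * f).trace| } := by
  refine fun hbdd => not_bddAbove_range_abs_mul
    (mul_ne_zero two_ne_zero (sub_ne_zero.mpr hq)) (hbdd.mono ?_)
  rintro _ ⟨t, rfl⟩
  refine ⟨t • Matrix.of ![![0, 1], ![1, 0]], ?_, ?_⟩
  · rw [sub_eq_zero.mpr ((Commute.refl _).smul_right t), opNorm2_zero]
    exact zero_le_one
  · simp only [Matrix.mul_smul, Matrix.trace_smul, trace_mul_pauliX, smul_eq_mul]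
    simp only [Matrix.of_apply, Matrix.cons_val', Matrix.cons_val_zero, Matrix.cons_val_one,
      Matrix.empty_val', Matrix.cons_val_fin_one]
    ring_nf

/-- with `D = [[0,1],[1,0]]` and density matrices
`ρ₀ = [[p₀,q₀],[q₀,1-p₀]]`, `ρ₁ = [[p₁,q₁],[q₁,1-p₁]]` with `q₀ ≠ q₁`, the Connes
spectral distance `sup { |tr(ρ₀ f) - tr(ρ₁ f)| : ‖[D,f]‖ ≤ 1 }` is infinite. -/
theorem connes_distance_unbounded (p₀ p₁ q₀ q₁ : ℝ) (hq : q₀ ≠ q₁)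
    (hρ₀ : (Matrix.of ![![p₀, q₀], ![q₀, 1 - p₀]]).PosSemidef)
    (hρ₁ : (Matrix.of ![![p₁, q₁], ![q₁, 1 - p₁]]).PosSemidef) :
    ¬ BddAbove { r : ℝ | ∃ f : Matrix (Fin 2) (Fin 2) ℝ,
      opNorm2 (Matrix.of ![![(0:ℝ), 1], ![1, 0]] * f
        - f * Matrix.of ![![(0:ℝ), 1], ![1, 0]]) ≤ 1 ∧
      r = |(Matrix.of ![![p₀, q₀], ![q₀, 1 - p₀]] * f).trace
            - (Matrix.of ![![p₁, q₁], ![q₁, 1 - p₁]] * f).trace| } :=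
  connes_distance_unbounded_general p₀ p₁ q₀ q₁ hq
end

section
/- For κ > 0, the functional d_{W₁,κ}(μ₁,μ₂) := sup_f { ∫_I tr(f (dμ₁ - dμ₂)) : ‖f‖_Lip ≤ 1, ‖f(x)‖ ≤ κ for all x }, where f ranges over continuous Hermitian-matrix-valued functions, defines a metric on positive-semidefinite-matrix-valued finite Borel measures on a compact interval I. -/
open MeasureTheory
open scoped ComplexOrder

noncomputable section

/-- The operator (spectral) norm of an `ℓ×ℓ` complex matrix. -/
def matOpNorm {l : ℕ} (A : Matrix (Fin l) (Fin l) ℂ) : ℝ :=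
  sSup { r : ℝ | ∃ v : EuclideanSpace ℂ (Fin l), ‖v‖ ≤ 1 ∧
    r = ‖(Matrix.toEuclideanLin A) v‖ }

variable {α : Type*} [MeasurableSpace α]

/-- Integral of a real function against a signed measure. -/
def sInt (ν : SignedMeasure α) (g : α → ℝ) : ℝ :=
  (∫ x, g x ∂ν.toJordanDecomposition.posPart)
    - ∫ x, g x ∂ν.toJordanDecomposition.negPart

/-- Integral of a complex function against a complex measure. -/
def cInt (ν : ComplexMeasure α) (g : α → ℂ) : ℂ :=
  ((sInt (ComplexMeasure.re ν) fun x => (g x).re)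
      - (sInt (ComplexMeasure.im ν) fun x => (g x).im) : ℝ)
    + Complex.I * ((sInt (ComplexMeasure.re ν) fun x => (g x).im)
      + (sInt (ComplexMeasure.im ν) fun x => (g x).re) : ℝ)

/-- The `(i,j)` entry of a matrix-valued measure, as a complex measure. -/
def entryMeasure {l : ℕ} (μ : VectorMeasure α (Matrix (Fin l) (Fin l) ℂ))
    (i j : Fin l) : ComplexMeasure α :=
  μ.mapRange (AddMonoidHom.mk' (fun A => A i j) fun _ _ => rfl)
    ((continuous_apply j).comp (continuous_apply i))

/-- `∫ tr(f dμ)` for a matrix-valued function `f` and matrix-valued measure `μ`. -/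
def trInt {l : ℕ} (μ : VectorMeasure α (Matrix (Fin l) (Fin l) ℂ))
    (f : α → Matrix (Fin l) (Fin l) ℂ) : ℂ :=
  ∑ i : Fin l, ∑ j : Fin l, cInt (entryMeasure μ j i) fun x => f x i j

/-- The matricial distance
`d_{W₁,κ}(μ₁,μ₂) = sup_f { ∫ tr(f(dμ₁-dμ₂)) : ‖f‖_Lip ≤ 1, ‖f(x)‖ ≤ κ }`, the
supremum taken over continuous Hermitian-matrix-valued functions. -/
def dWkMat {a b : ℝ} {l : ℕ} (κ : ℝ)
    (μ₁ μ₂ : VectorMeasure (Set.Icc a b) (Matrix (Fin l) (Fin l) ℂ)) : ℝ :=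
  sSup { r : ℝ | ∃ f : Set.Icc a b → Matrix (Fin l) (Fin l) ℂ,
    Continuous f ∧ (∀ x, (f x).IsHermitian) ∧
    (∀ x y, matOpNorm (f x - f y) ≤ dist x y) ∧
    (∀ x, matOpNorm (f x) ≤ κ) ∧
    r = (trInt μ₁ f - trInt μ₂ f).re }

/-!
Nonnegativity, symmetry and the triangle inequality hold for the supremum of
`f ↦ Re (∫ tr(f dμ₁) - ∫ tr(f dμ₂))` over any uniformly bounded set of test functions containing
`0` and closed under negation.

For definiteness, every bounded Lipschitz Hermitian-valued `f` becomes a test function after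
multiplication by a small `t > 0`, so `d(μ₁, μ₂) = 0` forces `Re tr(E ∫ g dμ₁) = Re tr(E ∫ g dμ₂)`
for every Hermitian matrix `E` and every bounded Lipschitz `g : I → ℝ`. The matrices `∫ g dμᵢ`
are Hermitian, so testing with `E = ∫ g dμ₁ - ∫ g dμ₂` shows that they coincide. Finally, bounded
Lipschitz functions separate finite Borel measures, since thickened indicators of a closed set are
Lipschitz and decrease to its indicator.
-/

open scoped Matrix Matrix.Norms.L2Operator

section MatrixNorm

variable {𝕜 n : Type*} [RCLike 𝕜] [Fintype n]

theorem Matrix.IsHermitian.eq_of_forall_re_trace_mul_eq {A B : Matrix n n 𝕜}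
    (hA : A.IsHermitian) (hB : B.IsHermitian)
    (h : ∀ E : Matrix n n 𝕜, E.IsHermitian → RCLike.re (E * A).trace = RCLike.re (E * B).trace) :
    A = B := by
  set D := A - B
  have hD : D.IsHermitian := hA.sub hB
  have hre : RCLike.re (Dᴴ * D).trace = 0 := by
    rw [hD.eq, Matrix.mul_sub, Matrix.trace_sub, map_sub, h D hD, sub_self]
  have hnonneg := RCLike.nonneg_iff.mp (Matrix.posSemidef_conjTranspose_mul_self D).trace_nonneg
  have htr : (Dᴴ * D).trace = 0 := RCLike.ext (by simpa using hre) (by simpa using hnonneg.2)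
  exact sub_eq_zero.mp (Matrix.trace_conjTranspose_mul_self_eq_zero_iff.mp htr)

variable [DecidableEq n]

theorem Matrix.norm_apply_le_l2_opNorm (A : Matrix n n 𝕜) (i j : n) : ‖A i j‖ ≤ ‖A‖ := by
  let e : EuclideanSpace 𝕜 n := EuclideanSpace.single j 1
  calc ‖A i j‖ = ‖Matrix.toEuclideanCLM (n := n) (𝕜 := 𝕜) A e i‖ := by
        simp [e, Matrix.mulVec_single]
    _ ≤ ‖Matrix.toEuclideanCLM (n := n) (𝕜 := 𝕜) A e‖ := PiLp.norm_apply_le _ _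
    _ ≤ ‖A‖ * ‖e‖ := (Matrix.toEuclideanCLM (n := n) (𝕜 := 𝕜) A).le_opNorm e
    _ = ‖A‖ := by simp [e]

end MatrixNorm

theorem matOpNorm_eq_norm {l : ℕ} (A : Matrix (Fin l) (Fin l) ℂ) : matOpNorm A = ‖A‖ := by
  rw [Matrix.cstar_norm_def, ← ContinuousLinearMap.sSup_unitClosedBall_eq_norm, matOpNorm]
  congr 1
  ext r
  simp only [Set.mem_image, Metric.mem_closedBall, dist_zero_right, eq_comm]
  rfl

section Integrals

theorem sInt_mul_const (σ : SignedMeasure α) (g : α → ℝ) (c : ℝ) :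
    sInt σ (fun x ↦ g x * c) = sInt σ g * c := by
  simp only [sInt, integral_mul_const, sub_mul]

theorem sInt_const_mul (σ : SignedMeasure α) (c : ℝ) (g : α → ℝ) :
    sInt σ (fun x ↦ c * g x) = c * sInt σ g := by
  simp only [sInt, integral_const_mul, mul_sub]

theorem sInt_neg_measure (σ : SignedMeasure α) (g : α → ℝ) : sInt (-σ) g = -sInt σ g := by
  simp only [sInt, SignedMeasure.toJordanDecomposition_neg, JordanDecomposition.neg_posPart,
    JordanDecomposition.neg_negPart, neg_sub]

theorem abs_sInt_le (σ : SignedMeasure α) {g : α → ℝ} {c : ℝ} (hg : ∀ x, |g x| ≤ c) :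
    |sInt σ g| ≤ c * (σ.totalVariation Set.univ).toReal := by
  have bound (ρ : Measure α) [IsFiniteMeasure ρ] : |∫ x, g x ∂ρ| ≤ c * (ρ Set.univ).toReal :=
    norm_integral_le_of_norm_le_const (.of_forall fun x ↦ (Real.norm_eq_abs _).trans_le (hg x))
  rw [SignedMeasure.totalVariation, Measure.add_apply,
    ENNReal.toReal_add (measure_ne_top _ _) (measure_ne_top _ _), mul_add]
  exact (abs_sub _ _).trans (add_le_add (bound _) (bound _))

theorem re_cInt (ν : ComplexMeasure α) (h : α → ℂ) :
    (cInt ν h).re = sInt (ComplexMeasure.re ν) (fun x ↦ (h x).re)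
      - sInt (ComplexMeasure.im ν) (fun x ↦ (h x).im) := by
  simp [cInt]

theorem im_cInt (ν : ComplexMeasure α) (h : α → ℂ) :
    (cInt ν h).im = sInt (ComplexMeasure.re ν) (fun x ↦ (h x).im)
      + sInt (ComplexMeasure.im ν) (fun x ↦ (h x).re) := by
  simp [cInt]

theorem cInt_ofReal (ν : ComplexMeasure α) (g : α → ℝ) :
    cInt ν (fun x ↦ g x) = ⟨sInt (ComplexMeasure.re ν) g, sInt (ComplexMeasure.im ν) g⟩ := by
  apply Complex.ext <;> simp [re_cInt, im_cInt, sInt]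

theorem cInt_ofReal_mul_const (ν : ComplexMeasure α) (g : α → ℝ) (c : ℂ) :
    cInt ν (fun x ↦ g x * c) = c * cInt ν (fun x ↦ g x) := by
  rw [cInt_ofReal]
  apply Complex.ext <;>
    simp only [re_cInt, im_cInt, Complex.re_ofReal_mul, Complex.im_ofReal_mul, sInt_mul_const] <;>
    simp only [Complex.mul_re, Complex.mul_im] <;>
    ring

theorem cInt_real_mul (ν : ComplexMeasure α) (t : ℝ) (h : α → ℂ) :
    cInt ν (fun x ↦ t * h x) = t * cInt ν h := by
  apply Complex.ext <;>
    simp only [re_cInt, im_cInt, Complex.re_ofReal_mul, Complex.im_ofReal_mul, sInt_const_mul] <;>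
    ring

theorem abs_re_cInt_le (ν : ComplexMeasure α) {h : α → ℂ} {c : ℝ} (hh : ∀ x, ‖h x‖ ≤ c) :
    |(cInt ν h).re| ≤ c * ((ComplexMeasure.re ν).totalVariation Set.univ).toReal
      + c * ((ComplexMeasure.im ν).totalVariation Set.univ).toReal := by
  rw [re_cInt]
  exact (abs_sub _ _).trans <| add_le_add
    (abs_sInt_le _ fun x ↦ (Complex.abs_re_le_norm _).trans (hh x))
    (abs_sInt_le _ fun x ↦ (Complex.abs_im_le_norm _).trans (hh x))

end Integrals

section TraceIntegral

variable {l : ℕ}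

theorem trInt_smul (μ : VectorMeasure α (Matrix (Fin l) (Fin l) ℂ)) (t : ℝ)
    (f : α → Matrix (Fin l) (Fin l) ℂ) : trInt μ (t • f) = t * trInt μ f := by
  simp only [trInt, Pi.smul_apply, Matrix.smul_apply, Complex.real_smul, cInt_real_mul,
    Finset.mul_sum]

theorem exists_abs_re_trInt_le (μ : VectorMeasure α (Matrix (Fin l) (Fin l) ℂ)) (κ : ℝ) :
    ∃ C, ∀ f : α → Matrix (Fin l) (Fin l) ℂ, (∀ x, ‖f x‖ ≤ κ) → |(trInt μ f).re| ≤ C := by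
  refine ⟨∑ i, ∑ j, (κ * ((ComplexMeasure.re (entryMeasure μ j i)).totalVariation Set.univ).toReal
    + κ * ((ComplexMeasure.im (entryMeasure μ j i)).totalVariation Set.univ).toReal),
    fun f hf ↦ ?_⟩
  rw [trInt, Complex.re_sum]
  refine (Finset.abs_sum_le_sum_abs _ _).trans (Finset.sum_le_sum fun i _ ↦ ?_)
  rw [Complex.re_sum]
  refine (Finset.abs_sum_le_sum_abs _ _).trans (Finset.sum_le_sum fun j _ ↦ ?_)
  exact abs_re_cInt_le _ fun x ↦ (Matrix.norm_apply_le_l2_opNorm _ i j).trans (hf x)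

def wkPairing (μ₁ μ₂ : VectorMeasure α (Matrix (Fin l) (Fin l) ℂ))
    (f : α → Matrix (Fin l) (Fin l) ℂ) : ℝ :=
  (trInt μ₁ f - trInt μ₂ f).re

section Pairing

variable {μ₁ μ₂ μ₃ : VectorMeasure α (Matrix (Fin l) (Fin l) ℂ)} {f : α → Matrix (Fin l) (Fin l) ℂ}

theorem wkPairing_smul (t : ℝ) : wkPairing μ₁ μ₂ (t • f) = t * wkPairing μ₁ μ₂ f := by
  rw [wkPairing, wkPairing, trInt_smul, trInt_smul, ← mul_sub, Complex.re_ofReal_mul]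

theorem wkPairing_zero : wkPairing μ₁ μ₂ 0 = 0 := by
  simpa using wkPairing_smul (μ₁ := μ₁) (μ₂ := μ₂) (f := 0) 0

theorem wkPairing_neg : wkPairing μ₁ μ₂ (-f) = -wkPairing μ₁ μ₂ f := by
  simpa using wkPairing_smul (μ₁ := μ₁) (μ₂ := μ₂) (f := f) (-1)

theorem wkPairing_swap : wkPairing μ₂ μ₁ f = wkPairing μ₁ μ₂ (-f) := by
  rw [wkPairing_neg, wkPairing, wkPairing, ← Complex.neg_re, neg_sub]

theorem wkPairing_add : wkPairing μ₁ μ₃ f = wkPairing μ₁ μ₂ f + wkPairing μ₂ μ₃ f := by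
  rw [wkPairing, wkPairing, wkPairing, ← Complex.add_re, sub_add_sub_cancel]

end Pairing

def integralMatrix (μ : VectorMeasure α (Matrix (Fin l) (Fin l) ℂ)) (g : α → ℝ) :
    Matrix (Fin l) (Fin l) ℂ :=
  Matrix.of fun i j ↦ cInt (entryMeasure μ i j) fun x ↦ g x

theorem trInt_smul_const (μ : VectorMeasure α (Matrix (Fin l) (Fin l) ℂ)) (g : α → ℝ)
    (E : Matrix (Fin l) (Fin l) ℂ) :
    trInt μ (fun x ↦ g x • E) = (E * integralMatrix μ g).trace := by
  simp only [trInt, Matrix.trace, Matrix.diag, Matrix.mul_apply, integralMatrix, Matrix.of_apply,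
    Matrix.smul_apply, Complex.real_smul, cInt_ofReal_mul_const]

theorem isHermitian_integralMatrix {μ : VectorMeasure α (Matrix (Fin l) (Fin l) ℂ)}
    (hμ : ∀ s, MeasurableSet s → (μ s).IsHermitian) (g : α → ℝ) :
    (integralMatrix μ g).IsHermitian := by
  ext i j
  have hre : ComplexMeasure.re (entryMeasure μ j i) = ComplexMeasure.re (entryMeasure μ i j) :=
    VectorMeasure.ext fun s hs ↦ by
      change (μ s j i).re = (μ s i j).re
      simp [← (hμ s hs).apply j i]
  have him : ComplexMeasure.im (entryMeasure μ j i) = -ComplexMeasure.im (entryMeasure μ i j) :=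
    VectorMeasure.ext fun s hs ↦ by
      change (μ s j i).im = -(μ s i j).im
      simp [← (hμ s hs).apply j i]
  simp only [integralMatrix, Matrix.conjTranspose_apply, Matrix.of_apply, cInt_ofReal, hre, him,
    sInt_neg_measure]
  apply Complex.ext <;> simp

end TraceIntegral

section Uniqueness

open Filter Topology BoundedContinuousFunction
open scoped NNReal

variable [PseudoMetricSpace α] [BorelSpace α]

theorem MeasureTheory.Measure.ext_of_forall_lipschitz_integral_eq {μ ν : Measure α}
    [IsFiniteMeasure μ] [IsFiniteMeasure ν]
    (h : ∀ g : α →ᵇ ℝ, (∃ K, LipschitzWith K g) → ∫ x, g x ∂μ = ∫ x, g x ∂ν) : μ = ν := by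
  have closed_eq : ∀ F : Set α, IsClosed F → μ F = ν F := by
    intro F hF
    let fs n : α →ᵇ ℝ≥0 := thickenedIndicator (Nat.one_div_pos_of_nat (n := n)) F
    have fs_lim : Tendsto (fun n x ↦ fs n x) atTop (𝓝 (F.indicator fun _ ↦ 1)) := by
      simpa only [hF.closure_eq] using thickenedIndicator_tendsto_indicator_closure
        (fun _ ↦ Nat.one_div_pos_of_nat) tendsto_one_div_add_atTop_nhds_zero_nat F
    have lim : ∀ (ρ : Measure α) [IsFiniteMeasure ρ],
        Tendsto (fun n ↦ ∫⁻ x, fs n x ∂ρ) atTop (𝓝 (ρ F)) := fun ρ _ ↦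
      measure_of_cont_bdd_of_tendsto_indicator ρ hF.measurableSet fs
        (fun n ↦ thickenedIndicator_le_one _ F) fs_lim
    have lintegral_eq : ∀ n, ∫⁻ x, fs n x ∂μ = ∫⁻ x, fs n x ∂ν := by
      intro n
      refine (ENNReal.toReal_eq_toReal_iff' (lintegral_lt_top_of_nnreal μ (fs n)).ne
        (lintegral_lt_top_of_nnreal ν (fs n)).ne).mp ?_
      rw [toReal_lintegral_coe_eq_integral, toReal_lintegral_coe_eq_integral]
      exact h ⟨⟨fun x ↦ fs n x, by fun_prop⟩, (fs n).map_bounded'⟩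
        ⟨_, (LipschitzWith.subtype_val _).comp (lipschitzWith_thickenedIndicator _ F)⟩
    exact tendsto_nhds_unique ((lim μ).congr lintegral_eq) (lim ν)
  refine ext_of_generate_finite _ ?_ isPiSystem_isClosed (fun F hF ↦ closed_eq F hF)
    (closed_eq _ isClosed_univ)
  rw [BorelSpace.measurable_eq (α := α), borel_eq_generateFrom_isClosed]

theorem MeasureTheory.SignedMeasure.ext_of_forall_lipschitz_sInt_eq {σ₁ σ₂ : SignedMeasure α}
    (h : ∀ g : α →ᵇ ℝ, (∃ K, LipschitzWith K g) → sInt σ₁ g = sInt σ₂ g) : σ₁ = σ₂ := by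
  have cross_eq : σ₁.toJordanDecomposition.posPart + σ₂.toJordanDecomposition.negPart
      = σ₂.toJordanDecomposition.posPart + σ₁.toJordanDecomposition.negPart := by
    refine Measure.ext_of_forall_lipschitz_integral_eq fun g hg ↦ ?_
    have := h g hg
    rw [sInt, sInt] at this
    rw [integral_add_measure (g.integrable _) (g.integrable _),
      integral_add_measure (g.integrable _) (g.integrable _)]
    linarith
  rw [← σ₁.toSignedMeasure_toJordanDecomposition, ← σ₂.toSignedMeasure_toJordanDecomposition,
    JordanDecomposition.toSignedMeasure, JordanDecomposition.toSignedMeasure,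
    sub_eq_sub_iff_add_eq_add, ← Measure.toSignedMeasure_add, ← Measure.toSignedMeasure_add]
  simp_rw [cross_eq]

theorem eq_of_forall_integralMatrix_eq {l : ℕ} {μ₁ μ₂ : VectorMeasure α (Matrix (Fin l) (Fin l) ℂ)}
    (h : ∀ g : α →ᵇ ℝ, (∃ K, LipschitzWith K g) → integralMatrix μ₁ g = integralMatrix μ₂ g) :
    μ₁ = μ₂ := by
  have sInt_eq (i j : Fin l) (g : α →ᵇ ℝ) (hg : ∃ K, LipschitzWith K g) :
      sInt (ComplexMeasure.re (entryMeasure μ₁ i j)) g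
          = sInt (ComplexMeasure.re (entryMeasure μ₂ i j)) g ∧
        sInt (ComplexMeasure.im (entryMeasure μ₁ i j)) g
          = sInt (ComplexMeasure.im (entryMeasure μ₂ i j)) g := by
    simpa only [integralMatrix, Matrix.of_apply, cInt_ofReal, Complex.mk.injEq] using
      congr_fun (congr_fun (h g hg) i) j
  ext s hs i j
  exact Complex.ext
    (congr_arg (· s) <|
      SignedMeasure.ext_of_forall_lipschitz_sInt_eq fun g hg ↦ (sInt_eq i j g hg).1)
    (congr_arg (· s) <|
      SignedMeasure.ext_of_forall_lipschitz_sInt_eq fun g hg ↦ (sInt_eq i j g hg).2)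

end Uniqueness

section TestFunctions

open Filter Topology
open scoped NNReal

variable {X : Type*} [PseudoMetricSpace X] {l : ℕ} {κ : ℝ} {f : X → Matrix (Fin l) (Fin l) ℂ}

def wkTestFns (κ : ℝ) : Set (X → Matrix (Fin l) (Fin l) ℂ) :=
  {f | LipschitzWith 1 f ∧ (∀ x, (f x).IsHermitian) ∧ ∀ x, ‖f x‖ ≤ κ}

theorem zero_mem_wkTestFns (hκ : 0 ≤ κ) : (0 : X → Matrix (Fin l) (Fin l) ℂ) ∈ wkTestFns κ :=
  ⟨(LipschitzWith.const 0).weaken zero_le_one, fun _ ↦ Matrix.isHermitian_zero,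
    fun _ ↦ by simpa using hκ⟩

theorem neg_mem_wkTestFns (hf : f ∈ wkTestFns κ) : -f ∈ wkTestFns κ :=
  ⟨hf.1.neg, fun x ↦ (hf.2.1 x).neg, fun x ↦ by simpa using hf.2.2 x⟩

theorem exists_smul_mem_wkTestFns (hκ : 0 < κ) {K : ℝ≥0} {C : ℝ} (hf : LipschitzWith K f)
    (hH : ∀ x, (f x).IsHermitian) (hC : ∀ x, ‖f x‖ ≤ C) :
    ∃ t : ℝ, 0 < t ∧ t • f ∈ wkTestFns κ := by
  have small : ∀ᶠ t in 𝓝 (0 : ℝ), t * (K : ℝ) < 1 ∧ t * C < κ :=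
    ((continuous_id.mul continuous_const).continuousAt.eventually_lt continuousAt_const
        (by simp)).and
      ((continuous_id.mul continuous_const).continuousAt.eventually_lt continuousAt_const
        (by simpa using hκ))
  obtain ⟨t, ⟨htK, htC⟩, ht⟩ :=
    ((small.filter_mono nhdsWithin_le_nhds).and (self_mem_nhdsWithin (s := Set.Ioi 0))).exists
  refine ⟨t, ht, LipschitzWith.of_dist_le_mul fun x y ↦ ?_, fun x ↦ (hH x).smul (.all t),
    fun x ↦ ?_⟩
  · calc dist (t • f x) (t • f y) = t * dist (f x) (f y) := by
          rw [dist_smul₀, Real.norm_of_nonneg ht.le]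
      _ ≤ t * (K * dist x y) := by gcongr; exact hf.dist_le_mul x y
      _ ≤ (1 : ℝ≥0) * dist x y := by
          rw [← mul_assoc, NNReal.coe_one]; gcongr
  · calc ‖t • f x‖ = t * ‖f x‖ := by rw [norm_smul, Real.norm_of_nonneg ht.le]
      _ ≤ t * C := by gcongr; exact hC x
      _ ≤ κ := htC.le

end TestFunctions

section MatrixWasserstein

open scoped NNReal

variable [PseudoMetricSpace α] {l : ℕ} {κ : ℝ}
  {μ₁ μ₂ μ₃ : VectorMeasure α (Matrix (Fin l) (Fin l) ℂ)} {f : α → Matrix (Fin l) (Fin l) ℂ}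

def dWk (κ : ℝ) (μ₁ μ₂ : VectorMeasure α (Matrix (Fin l) (Fin l) ℂ)) : ℝ :=
  sSup (wkPairing μ₁ μ₂ '' wkTestFns κ)

theorem bddAbove_wkPairing_image : BddAbove (wkPairing μ₁ μ₂ '' wkTestFns κ) := by
  obtain ⟨C₁, hC₁⟩ := exists_abs_re_trInt_le μ₁ κ
  obtain ⟨C₂, hC₂⟩ := exists_abs_re_trInt_le μ₂ κ
  refine ⟨C₁ + C₂, Set.forall_mem_image.2 fun f hf ↦ ?_⟩
  rw [wkPairing, Complex.sub_re]
  linarith [le_abs_self (trInt μ₁ f).re, neg_abs_le (trInt μ₂ f).re, hC₁ f hf.2.2, hC₂ f hf.2.2]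

theorem wkPairing_le_dWk (hf : f ∈ wkTestFns κ) : wkPairing μ₁ μ₂ f ≤ dWk κ μ₁ μ₂ :=
  le_csSup bddAbove_wkPairing_image (Set.mem_image_of_mem _ hf)

theorem dWk_nonneg (hκ : 0 ≤ κ) : 0 ≤ dWk κ μ₁ μ₂ := by
  simpa [wkPairing_zero] using
    wkPairing_le_dWk (μ₁ := μ₁) (μ₂ := μ₂) (zero_mem_wkTestFns hκ)

theorem dWk_comm : dWk κ μ₁ μ₂ = dWk κ μ₂ μ₁ := by
  have image_subset : ∀ ν₁ ν₂ : VectorMeasure α (Matrix (Fin l) (Fin l) ℂ),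
      wkPairing ν₂ ν₁ '' wkTestFns κ ⊆ wkPairing ν₁ ν₂ '' wkTestFns κ := by
    rintro ν₁ ν₂ _ ⟨f, hf, rfl⟩
    exact ⟨-f, neg_mem_wkTestFns hf, wkPairing_swap.symm⟩
  rw [dWk, dWk, (image_subset μ₁ μ₂).antisymm (image_subset μ₂ μ₁)]

theorem dWk_triangle (hκ : 0 ≤ κ) : dWk κ μ₁ μ₃ ≤ dWk κ μ₁ μ₂ + dWk κ μ₂ μ₃ :=
  csSup_le (Set.Nonempty.image _ ⟨0, zero_mem_wkTestFns hκ⟩) <|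
    Set.forall_mem_image.2 fun _ hf ↦
      wkPairing_add.trans_le (add_le_add (wkPairing_le_dWk hf) (wkPairing_le_dWk hf))

theorem wkPairing_eq_zero_of_dWk_eq_zero (h : dWk κ μ₁ μ₂ = 0) (hf : f ∈ wkTestFns κ) :
    wkPairing μ₁ μ₂ f = 0 := by
  have le := h ▸ wkPairing_le_dWk (μ₁ := μ₁) (μ₂ := μ₂) hf
  have neg_le := h ▸ wkPairing_le_dWk (μ₁ := μ₁) (μ₂ := μ₂) (neg_mem_wkTestFns hf)
  rw [wkPairing_neg] at neg_le
  linarith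

theorem wkPairing_eq_zero_of_lipschitz (hκ : 0 < κ) (h : dWk κ μ₁ μ₂ = 0) {K : ℝ≥0} {C : ℝ}
    (hf : LipschitzWith K f) (hH : ∀ x, (f x).IsHermitian) (hC : ∀ x, ‖f x‖ ≤ C) :
    wkPairing μ₁ μ₂ f = 0 := by
  obtain ⟨t, ht, hmem⟩ := exists_smul_mem_wkTestFns hκ hf hH hC
  have := wkPairing_eq_zero_of_dWk_eq_zero h hmem
  rwa [wkPairing_smul, mul_eq_zero, or_iff_right ht.ne'] at this

theorem eq_of_dWk_eq_zero [BorelSpace α] (hκ : 0 < κ)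
    (hμ₁ : ∀ s, MeasurableSet s → (μ₁ s).IsHermitian)
    (hμ₂ : ∀ s, MeasurableSet s → (μ₂ s).IsHermitian) (h : dWk κ μ₁ μ₂ = 0) : μ₁ = μ₂ := by
  refine eq_of_forall_integralMatrix_eq fun g ⟨K, hg⟩ ↦
    (isHermitian_integralMatrix hμ₁ g).eq_of_forall_re_trace_mul_eq
      (isHermitian_integralMatrix hμ₂ g) fun E hE ↦ ?_
  have lipschitz : LipschitzWith (K * ‖E‖₊) fun x ↦ g x • E :=
    LipschitzWith.of_dist_le_mul fun x y ↦ by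
      rw [dist_eq_norm, ← sub_smul, norm_smul, ← dist_eq_norm, NNReal.coe_mul, coe_nnnorm,
        mul_right_comm]
      gcongr
      exact hg.dist_le_mul x y
  have bound (x : α) : ‖g x • E‖ ≤ ‖g‖ * ‖E‖ := by
    rw [norm_smul]
    gcongr
    exact g.norm_coe_le_norm x
  have := wkPairing_eq_zero_of_lipschitz hκ h lipschitz (fun x ↦ (hE.smul (.all (g x)))) bound
  rw [wkPairing, trInt_smul_const, trInt_smul_const, Complex.sub_re, sub_eq_zero] at this
  simpa only [RCLike.re_to_complex] using this

end MatrixWasserstein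

theorem dWkMat_eq_dWk {a b : ℝ} {l : ℕ} (κ : ℝ)
    (μ₁ μ₂ : VectorMeasure (Set.Icc a b) (Matrix (Fin l) (Fin l) ℂ)) :
    dWkMat κ μ₁ μ₂ = dWk κ μ₁ μ₂ := by
  rw [dWkMat, dWk]
  congr 1
  ext r
  simp only [matOpNorm_eq_norm, ← dist_eq_norm, Set.mem_image, wkTestFns, Set.mem_ofPred_eq]
  constructor
  · rintro ⟨f, -, hH, hLip, hC, rfl⟩
    exact ⟨f, ⟨.of_dist_le_mul fun x y ↦ by simpa using hLip x y, hH, hC⟩, rfl⟩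
  · rintro ⟨f, ⟨hLip, hH, hC⟩, rfl⟩
    exact ⟨f, hLip.continuous, hH, fun x y ↦ by simpa using hLip.dist_le_mul x y, hC, rfl⟩

theorem dWkMat_is_metric_general {a b : ℝ} {l : ℕ} (κ : ℝ) (hκ : 0 < κ) :
    (∀ μ₁ μ₂ : VectorMeasure (Set.Icc a b) (Matrix (Fin l) (Fin l) ℂ),
      (∀ s, MeasurableSet s → (μ₁ s).PosSemidef) →
      (∀ s, MeasurableSet s → (μ₂ s).PosSemidef) →
      0 ≤ dWkMat κ μ₁ μ₂) ∧
    (∀ μ₁ μ₂ : VectorMeasure (Set.Icc a b) (Matrix (Fin l) (Fin l) ℂ),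
      (∀ s, MeasurableSet s → (μ₁ s).PosSemidef) →
      (∀ s, MeasurableSet s → (μ₂ s).PosSemidef) →
      dWkMat κ μ₁ μ₂ = dWkMat κ μ₂ μ₁) ∧
    (∀ μ₁ μ₂ μ₃ : VectorMeasure (Set.Icc a b) (Matrix (Fin l) (Fin l) ℂ),
      (∀ s, MeasurableSet s → (μ₁ s).PosSemidef) →
      (∀ s, MeasurableSet s → (μ₂ s).PosSemidef) →
      (∀ s, MeasurableSet s → (μ₃ s).PosSemidef) →
      dWkMat κ μ₁ μ₃ ≤ dWkMat κ μ₁ μ₂ + dWkMat κ μ₂ μ₃) ∧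
    (∀ μ₁ μ₂ : VectorMeasure (Set.Icc a b) (Matrix (Fin l) (Fin l) ℂ),
      (∀ s, MeasurableSet s → (μ₁ s).PosSemidef) →
      (∀ s, MeasurableSet s → (μ₂ s).PosSemidef) →
      dWkMat κ μ₁ μ₂ = 0 → μ₁ = μ₂) := by
  simp only [dWkMat_eq_dWk]
  exact ⟨fun _ _ _ _ ↦ dWk_nonneg hκ.le, fun _ _ _ _ ↦ dWk_comm,
    fun _ _ _ _ _ _ ↦ dWk_triangle hκ.le,
    fun _ _ h₁ h₂ ↦ eq_of_dWk_eq_zero hκ (fun s hs ↦ (h₁ s hs).isHermitian)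
      (fun s hs ↦ (h₂ s hs).isHermitian)⟩

/-- for `κ > 0`, `d_{W₁,κ}` is a metric on positive-semidefinite
matrix-valued finite Borel measures on a compact interval: nonnegative, symmetric,
satisfying the triangle inequality, and vanishing exactly on equal measures. -/
theorem dWkMat_is_metric {a b : ℝ} (hab : a ≤ b) {l : ℕ} (κ : ℝ) (hκ : 0 < κ) :
    (∀ μ₁ μ₂ : VectorMeasure (Set.Icc a b) (Matrix (Fin l) (Fin l) ℂ),
      (∀ s, MeasurableSet s → (μ₁ s).PosSemidef) →
      (∀ s, MeasurableSet s → (μ₂ s).PosSemidef) →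
      0 ≤ dWkMat κ μ₁ μ₂) ∧
    (∀ μ₁ μ₂ : VectorMeasure (Set.Icc a b) (Matrix (Fin l) (Fin l) ℂ),
      (∀ s, MeasurableSet s → (μ₁ s).PosSemidef) →
      (∀ s, MeasurableSet s → (μ₂ s).PosSemidef) →
      dWkMat κ μ₁ μ₂ = dWkMat κ μ₂ μ₁) ∧
    (∀ μ₁ μ₂ μ₃ : VectorMeasure (Set.Icc a b) (Matrix (Fin l) (Fin l) ℂ),
      (∀ s, MeasurableSet s → (μ₁ s).PosSemidef) →
      (∀ s, MeasurableSet s → (μ₂ s).PosSemidef) →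
      (∀ s, MeasurableSet s → (μ₃ s).PosSemidef) →
      dWkMat κ μ₁ μ₃ ≤ dWkMat κ μ₁ μ₂ + dWkMat κ μ₂ μ₃) ∧
    (∀ μ₁ μ₂ : VectorMeasure (Set.Icc a b) (Matrix (Fin l) (Fin l) ℂ),
      (∀ s, MeasurableSet s → (μ₁ s).PosSemidef) →
      (∀ s, MeasurableSet s → (μ₂ s).PosSemidef) →
      dWkMat κ μ₁ μ₂ = 0 → μ₁ = μ₂) :=
  dWkMat_is_metric_general κ hκ

end
end
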